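/- arXiv:1307.0089 — 8 statements merged into one kernel-verified Lean document; each statement's English description precedes it below -/
import Mathlib

section
/- Let G be a finite group, H a subgroup of G, and N a normal subgroup of G. If H satisfies the Π-property in G, then HN/N satisfies the Π-property in G/N. -/
open scoped Pointwise

/-- `(K, L)` is a chief factor of `G`: both normal, `K < L`, and no normal
subgroup of `G` lies strictly between them (equivalently `L/K` is a minimal
normal subgroup of `G/K`). -/
def IsChiefFactor (G : Type*) [Group G] (K L : Subgroup G) : Prop :=
  K.Normal ∧ L.Normal ∧ K < L ∧
    ∀ N : Subgroup G, N.Normal → K ≤ N → N ≤ L → N = K ∨ N = L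

/-- `H` satisfies the Π-property in `G`: for every chief factor `L/K` of `G`,
every prime dividing `|G/K : N_{G/K}(HK/K ∩ L/K)|` divides `|HK/K ∩ L/K|`. -/
def PiProperty (G : Type*) [Group G] (H : Subgroup G) : Prop :=
  ∀ (K L : Subgroup G) (hK : K.Normal), IsChiefFactor G K L →
    ∀ p : ℕ, p.Prime →
      p ∣ (Subgroup.normalizer ((Subgroup.map (@QuotientGroup.mk' G _ K hK) H ⊓
            Subgroup.map (@QuotientGroup.mk' G _ K hK) L : Subgroup (G ⧸ K)) : Set (G ⧸ K))).index →
      p ∣ Nat.card ↥(Subgroup.map (@QuotientGroup.mk' G _ K hK) H ⊓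
            Subgroup.map (@QuotientGroup.mk' G _ K hK) L)

/-- `H` is Π-supplemented in `G`. -/
def PiSupplemented (G : Type*) [Group G] (H : Subgroup G) : Prop :=
  ∃ T : Subgroup G, (H : Set G) * (T : Set G) = (Set.univ : Set G) ∧
    ∃ I : Subgroup G, H ⊓ T ≤ I ∧ I ≤ H ∧ PiProperty G I

/-! Let `f : G → Q` be onto. A chief factor `L/K` of `Q` pulls back to a chief factor `L'/K'` of
`G`, and the isomorphism `G/K' ≃* Q/K` induced by `G → Q → Q/K` carries `HK'/K' ∩ L'/K'` onto
`f(H)K/K ∩ L/K`. Isomorphisms preserve orders and normalizer indices, so the Π-condition for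
`f(H)` at `L/K` is the one for `H` at `L'/K'`. -/

section

variable {G Q : Type*} [Group G] [Group Q]

open Subgroup

theorem Subgroup.index_normalizer_map_equiv (e : G ≃* Q) (S : Subgroup G) :
    (normalizer ((S.map e.toMonoidHom : Subgroup Q) : Set Q)).index =
      (normalizer (S : Set G)).index := by
  rw [← map_equiv_normalizer_eq, index_map_of_bijective e.bijective]

theorem IsChiefFactor.comap {f : G →* Q} (hf : Function.Surjective f) {K L : Subgroup Q}
    (h : IsChiefFactor Q K L) : IsChiefFactor G (K.comap f) (L.comap f) := by
  obtain ⟨hK, hL, hKL, hmin⟩ := h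
  refine ⟨hK.comap f, hL.comap f, (comap_lt_comap_of_surjective hf).2 hKL,
    fun M hM_normal hKM hML => ?_⟩
  have hK_le : K ≤ M.map f := map_comap_eq_self_of_surjective hf K ▸ map_mono hKM
  have hM : (M.map f).comap f = M := comap_map_eq_self ((ker_le_comap f K).trans hKM)
  rcases hmin (M.map f) (hM_normal.map f hf) hK_le (map_le_iff_le_comap.2 hML) with h | h
  · exact .inl (by rw [← hM, h])
  · exact .inr (by rw [← hM, h])

theorem PiProperty.map {f : G →* Q} (hf : Function.Surjective f) {H : Subgroup G}
    (h : PiProperty G H) : PiProperty Q (H.map f) := by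
  intro K L hK hKL p hp hdvd
  set g := (QuotientGroup.mk' K).comp f
  set e := QuotientGroup.quotientKerEquivOfSurjective g ((QuotientGroup.mk'_surjective K).comp hf)
  have he (S : Subgroup G) :
      (S.map (QuotientGroup.mk' g.ker)).map e.toMonoidHom = (S.map f).map (QuotientGroup.mk' K) := by
    rw [map_map, map_map]
    rfl
  have hZ : ((H.map (QuotientGroup.mk' g.ker) ⊓ (L.comap f).map (QuotientGroup.mk' g.ker))).map
      e.toMonoidHom = (H.map f).map (QuotientGroup.mk' K) ⊓ L.map (QuotientGroup.mk' K) := by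
    rw [map_inf_eq _ _ e.toMonoidHom e.injective, he, he, map_comap_eq_self_of_surjective hf]
  have hchief : IsChiefFactor G g.ker (L.comap f) := by
    rw [show g.ker = K.comap f from congrArg (comap f) (QuotientGroup.ker_mk' K)]
    exact hKL.comap hf
  rw [← hZ, card_map_of_injective (f := e.toMonoidHom) e.injective]
  rw [← hZ, index_normalizer_map_equiv] at hdvd
  exact h g.ker (L.comap f) g.normal_ker hchief p hp hdvd

end

theorem piProperty_quotient_general {G : Type*} [Group G]
    (H N : Subgroup G) [N.Normal] (h : PiProperty G H) :
    PiProperty (G ⧸ N) (Subgroup.map (QuotientGroup.mk' N) H) :=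
  h.map (QuotientGroup.mk'_surjective N)

theorem piProperty_quotient {G : Type*} [Group G] [Finite G]
    (H N : Subgroup G) [N.Normal] (h : PiProperty G H) :
    PiProperty (G ⧸ N) (Subgroup.map (QuotientGroup.mk' N) H) :=
  piProperty_quotient_general H N h
end

section
/- Let G = ⟨a, b | a^5 = b^4 = 1, b⁻¹ a b = a²⟩ (the Frobenius group of order 20) and let H = ⟨b²⟩. Then H is not c-supplemented in G, i.e., there is no subgroup T of G with G = HT and H ∩ T ≤ H_G, where H_G is the core of H in G. -/
open scoped Pointwise

/-- `H` is c-supplemented in `G`: there is `T ≤ G` with `G = HT` and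
`H ∩ T ≤ H_G`, the normal core of `H` in `G`. -/
def CSupplemented (G : Type*) [Group G] (H : Subgroup G) : Prop :=
  ∃ T : Subgroup G, (H : Set G) * (T : Set G) = (Set.univ : Set G) ∧
    H ⊓ T ≤ H.normalCore

/-!
If `G = ⟨b²⟩ T`, then `|G : T| ≤ 2`, so `T` contains every square, in particular `b²`; hence
`⟨b²⟩ ∩ T = ⟨b²⟩` lies in the core and `⟨b²⟩` is normal. Being of order at most `2`, it is then
central. But conjugation by `b²` sends `a` to `a⁴`, so `a³ = 1`, and with `a⁵ = 1` this forces
`a = 1`; then `G = ⟨b⟩` has order dividing `4`, not `20`.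
-/

namespace Subgroup

variable {G : Type*} [Group G]

theorem sq_mem_of_mul_eq_univ {H T : Subgroup G} [Finite H] (hH : Nat.card H ≤ 2)
    (hHT : (H : Set G) * (T : Set G) = Set.univ) (g : G) : g ^ 2 ∈ T := by
  have hsurj : Function.Surjective (fun h : H => ((h : G) : G ⧸ T)) := by
    intro q
    induction q using QuotientGroup.induction_on with | H x =>
    obtain ⟨h, hh, t, ht, rfl⟩ : x ∈ (H : Set G) * (T : Set G) := hHT ▸ Set.mem_univ x
    exact ⟨⟨h, hh⟩, (QuotientGroup.mk_mul_of_mem h ht).symm⟩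
  have : Finite (G ⧸ T) := Finite.of_surjective _ hsurj
  have hle : T.index ≤ 2 := by
    rw [index_eq_card]
    exact (Nat.card_le_card_of_surjective _ hsurj).trans hH
  have hne := T.index_ne_zero_of_finite
  obtain h | h : T.index = 1 ∨ T.index = 2 := by omega
  · rw [index_eq_one.mp h]
    exact mem_top _
  · exact sq_mem_of_index_two h g

theorem commute_of_normal_zpowers {x : G} (hx : x ^ 2 = 1) [(zpowers x).Normal] (g : G) :
    Commute g x := by
  obtain ⟨k, hk⟩ := mem_zpowers_iff.mp (Normal.conj_mem inferInstance x (mem_zpowers x) g)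
  have hsq : ∀ m : ℤ, x ^ (2 * m) = 1 := fun m => by rw [zpow_mul, zpow_two, ← sq, hx, one_zpow]
  rcases Int.even_or_odd' k with ⟨m, rfl | rfl⟩
  · rw [hsq, eq_comm, conj_eq_one_iff] at hk
    rw [hk]
    exact Commute.one_right g
  · rw [zpow_add, hsq, one_mul, zpow_one] at hk
    exact (eq_mul_inv_iff_mul_eq.mp hk).symm

end Subgroup

open Subgroup

theorem CSupplemented.normal_zpowers_sq {G : Type*} [Group G] {g : G} (hg : g ^ 4 = 1)
    (h : CSupplemented G (zpowers (g ^ 2))) : (zpowers (g ^ 2)).Normal := by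
  obtain ⟨T, hprod, hcore⟩ := h
  have hsq : (g ^ 2) ^ 2 = 1 := by rw [← pow_mul, hg]
  have hcard : Nat.card (zpowers (g ^ 2)) ≤ 2 := by
    rw [Nat.card_zpowers]
    exact orderOf_le_of_pow_eq_one two_pos hsq
  have hfin : IsOfFinOrder (g ^ 2) := isOfFinOrder_iff_pow_eq_one.mpr ⟨2, two_pos, hsq⟩
  have : Finite (zpowers (g ^ 2)) :=
    Nat.finite_of_card_ne_zero (Nat.card_zpowers (g ^ 2) ▸ hfin.orderOf_pos.ne')
  have hle : zpowers (g ^ 2) ≤ T := zpowers_le.mpr (sq_mem_of_mul_eq_univ hcard hprod g)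
  have hcore_eq : (zpowers (g ^ 2)).normalCore = zpowers (g ^ 2) :=
    le_antisymm (normalCore_le _) ((le_inf le_rfl hle).trans hcore)
  exact hcore_eq ▸ normalCore_normal _

theorem eq_one_of_conj_eq_sq_of_commute {G : Type*} [Group G] {a b : G} (ha : a ^ 5 = 1)
    (hrel : b⁻¹ * a * b = a ^ 2) (hcomm : Commute a (b ^ 2)) : a = 1 := by
  have hconj : ∀ n : ℕ, b⁻¹ * a ^ n * b = a ^ (2 * n) := fun n => by
    rw [pow_mul, ← hrel]
    simpa using (conj_pow (a := b⁻¹) (b := a) (i := n)).symm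
  have ha4 : a ^ 4 = a :=
    calc a ^ 4 = b⁻¹ * a ^ 2 * b := (hconj 2).symm
      _ = b⁻¹ * (b⁻¹ * a * b) * b := by rw [hrel]
      _ = (b ^ 2)⁻¹ * (a * b ^ 2) := by simp only [sq, mul_inv_rev, mul_assoc]
      _ = a := by rw [hcomm.eq]; group
  have ha3 : a ^ 3 = 1 := by
    rw [← mul_left_cancel_iff (a := a), ← pow_succ', ha4, mul_one]
  have hord : orderOf a ∣ Nat.gcd 3 5 :=
    Nat.dvd_gcd (orderOf_dvd_of_pow_eq_one ha3) (orderOf_dvd_of_pow_eq_one ha)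
  exact orderOf_eq_one_iff.mp (Nat.dvd_one.mp hord)

theorem not_cSupplemented_in_frobenius20 {G : Type*} [Group G] (a b : G)
    (ha : a ^ 5 = 1) (hb : b ^ 4 = 1) (hrel : b⁻¹ * a * b = a ^ 2)
    (hgen : Subgroup.closure ({a, b} : Set G) = ⊤) (hcard : Nat.card G = 20) :
    ¬ CSupplemented G (Subgroup.zpowers (b ^ 2)) := by
  intro hsupp
  have : (zpowers (b ^ 2)).Normal := hsupp.normal_zpowers_sq hb
  have ha1 : a = 1 :=
    eq_one_of_conj_eq_sq_of_commute ha hrel (commute_of_normal_zpowers (by rw [← pow_mul, hb]) a)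
  subst ha1
  have hcyc : zpowers b = ⊤ := by rw [zpowers_eq_closure, ← closure_insert_one, hgen]
  have hdvd := orderOf_dvd_of_pow_eq_one hb
  rw [orderOf_eq_card_of_zpowers_eq_top hcyc, hcard] at hdvd
  norm_num at hdvd
end

section
/- Let P be a finite p-group and α a p'-automorphism of P (an automorphism whose order is coprime to p). If α acts trivially on Ω₂(P), the subgroup generated by all elements of order dividing p², then α = 1. -/
/-!
Argue by induction on `|P|`: then `α` fixes every proper characteristic subgroup pointwise.
A fixed displacement `c = u⁻¹ α(u)` forces `α(u) = u`, since `αᵏ(u) = u cᵏ` and the `p`-element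
`c` is killed by the `p'`-number `orderOf α`. As `α` fixes `[P, P]`, every displacement
centralizes `[P, P]`; so either that centralizer is proper (hence fixed, and `α = 1`) or `P` has
class at most two. In the latter case let `x` be a non-fixed element of least order `pⁿ`, so
`n ≥ 3`, and `c = x⁻¹ α(x)`. Since `α` fixes `x ^ p`, `c` commutes with `x ^ p`, so the central
element `w = [c, x]` satisfies `w ^ p ^ (n - 2) = 1`. With `N = p ^ (n - 1)`, the class-two
formula `(x c) ^ N = w ^ (N choose 2) x ^ N c ^ N` and `(x c) ^ N = α (x ^ N) = x ^ N` give
`c ^ N = 1`; so `c` is fixed, and then so is `x`.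
-/

open Subgroup
open scoped commutatorElement

theorem Nat.Prime.pow_dvd_choose_two_pow_succ {p : ℕ} (hp : p.Prime) (m : ℕ) :
    p ^ m ∣ (p ^ (m + 1)).choose 2 := by
  rw [Nat.choose_two_right]
  rcases hp.eq_two_or_odd' with rfl | hodd
  · rw [pow_succ, mul_assoc, mul_comm 2, ← mul_assoc, Nat.mul_div_cancel _ two_pos]
    exact dvd_mul_right _ _
  · have h2 : 2 ∣ p ^ (m + 1) - 1 := (Nat.Odd.sub_odd hodd.pow odd_one).two_dvd
    rw [Nat.mul_div_assoc _ h2]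
    exact (pow_dvd_pow p m.le_succ).mul_right _

section Commutators

variable {G : Type*} [Group G] {a b c x : G}

theorem commute_inv_mul_of_commutatorElement_eq (h : ⁅x, a⁆ = ⁅x, b⁆) : Commute x (a⁻¹ * b) := by
  have hconj : a⁻¹ * b * x⁻¹ * (a⁻¹ * b)⁻¹ = x⁻¹ :=
    calc a⁻¹ * b * x⁻¹ * (a⁻¹ * b)⁻¹ = a⁻¹ * (x⁻¹ * ⁅x, b⁆) * a := by group
      _ = a⁻¹ * (x⁻¹ * ⁅x, a⁆) * a := by rw [h]
      _ = x⁻¹ := by group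
  have : Commute (a⁻¹ * b) x⁻¹ := mul_inv_eq_iff_eq_mul.mp hconj
  exact (Commute.inv_right_iff.mp this).symm

theorem commutatorElement_pow_right (hx : Commute ⁅c, x⁆ x) (k : ℕ) :
    ⁅c, x ^ k⁆ = ⁅c, x⁆ ^ k := by
  have hsemi : SemiconjBy c x (⁅c, x⁆ * x) := by
    rw [SemiconjBy, commutatorElement_def]; group
  have hk : c * x ^ k = ⁅c, x⁆ ^ k * x ^ k * c := by
    rw [(hsemi.pow_right k).eq, hx.mul_pow]
  rw [commutatorElement_def, hk]
  group

theorem commutatorElement_pow_left (hc : Commute ⁅c, x⁆ c) (k : ℕ) :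
    ⁅c ^ k, x⁆ = ⁅c, x⁆ ^ k := by
  have hsemi : SemiconjBy x c⁻¹ (c⁻¹ * ⁅c, x⁆) := by
    rw [SemiconjBy, commutatorElement_def]; group
  have hk : x * c⁻¹ ^ k = c⁻¹ ^ k * ⁅c, x⁆ ^ k * x := by
    rw [(hsemi.pow_right k).eq, hc.inv_right.symm.mul_pow]
  rw [commutatorElement_def, ← inv_pow, mul_assoc (c ^ k), hk]
  group

theorem mul_pow_eq_commutatorElement_pow_choose_two (hx : Commute ⁅c, x⁆ x)
    (hc : Commute ⁅c, x⁆ c) (k : ℕ) :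
    (x * c) ^ k = ⁅c, x⁆ ^ k.choose 2 * x ^ k * c ^ k := by
  induction k with
  | zero => simp
  | succ k ih =>
    have hck : c ^ k * x = ⁅c, x⁆ ^ k * x * c ^ k := by
      rw [← commutatorElement_pow_left hc, commutatorElement_def]; group
    have hchoose : (k + 1).choose 2 = k.choose 2 + k := by
      rw [Nat.choose_succ_succ', Nat.choose_one_right, add_comm]
    rw [pow_succ, ih, hchoose, pow_add, pow_succ, pow_succ]
    calc ⁅c, x⁆ ^ k.choose 2 * x ^ k * c ^ k * (x * c)
        = ⁅c, x⁆ ^ k.choose 2 * x ^ k * (c ^ k * x) * c := by group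
      _ = ⁅c, x⁆ ^ k.choose 2 * (x ^ k * ⁅c, x⁆ ^ k) * x * c ^ k * c := by rw [hck]; group
      _ = ⁅c, x⁆ ^ k.choose 2 * ⁅c, x⁆ ^ k * (x ^ k * x) * (c ^ k * c) := by
        rw [← ((hx.pow_left k).pow_right k).eq]; group

end Commutators

namespace MulAut

variable {P : Type*} [Group P] {p : ℕ} {α : MulAut P}

theorem pow_apply_eq_mul_pow {u c : P} (hu : α u = u * c) (hc : α c = c) (k : ℕ) :
    (α ^ k) u = u * c ^ k := by
  induction k with
  | zero => simp
  | succ k ih => rw [pow_succ', mul_apply, ih, map_mul, hu, map_pow, hc, mul_assoc, ← pow_succ']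

theorem apply_eq_self_of_apply_inv_mul_apply_eq (hP : IsPGroup p P) (hα : (orderOf α).Coprime p)
    {u : P} (h : α (u⁻¹ * α u) = u⁻¹ * α u) : α u = u := by
  have hu : α u = u * (u⁻¹ * α u) := (mul_inv_cancel_left u (α u)).symm
  have hc : (u⁻¹ * α u) ^ orderOf α = 1 := by
    simpa [pow_orderOf_eq_one] using (pow_apply_eq_mul_pow hu h (orderOf α)).symm
  have hc1 : orderOf (u⁻¹ * α u) = 1 :=
    (hP.orderOf_coprime hα.symm _).eq_one_of_dvd (orderOf_dvd_of_pow_eq_one hc)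
  rw [hu, orderOf_eq_one_iff.mp hc1, mul_one]

theorem inv_mul_apply_mem_centralizer_commutator (h : ∀ t ∈ commutator P, α t = t) (v : P) :
    v⁻¹ * α v ∈ centralizer (commutator P : Set P) := by
  rw [mem_centralizer_iff]
  intro t ht
  have hcomm : ⁅t, α v⁆ = ⁅t, v⁆ :=
    calc ⁅t, α v⁆ = α ⁅t, v⁆ := by rw [map_commutatorElement, h t ht]
      _ = ⁅t, v⁆ := h _ (commutator_mem_commutator (mem_top t) (mem_top v))
  exact (commute_inv_mul_of_commutatorElement_eq hcomm.symm).eq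

variable [Fact p.Prime]

theorem apply_eq_self_of_forall_orderOf_lt (hP : IsPGroup p P) (hα : (orderOf α).Coprime p)
    (hcen : commutator P ≤ center P) (hfix : ∀ y : P, y ^ p ^ 2 = 1 → α y = y) {x : P}
    (hx : ∀ y : P, orderOf y < orderOf x → α y = y) : α x = x := by
  have hp : p.Prime := Fact.out
  obtain ⟨n, hn⟩ := IsPGroup.iff_orderOf.mp hP x
  have hfix_lt : ∀ y : P, ∀ j < n, y ^ p ^ j = 1 → α y = y := fun y j hj hy =>
    hx y <| hn ▸ (orderOf_le_of_pow_eq_one (pow_pos hp.pos j) hy).trans_lt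
      (Nat.pow_lt_pow_right hp.one_lt hj)
  by_cases hn2 : n ≤ 2
  · exact hfix x (orderOf_dvd_iff_pow_eq_one.mp (hn ▸ pow_dvd_pow p hn2))
  obtain ⟨m, rfl⟩ : ∃ m, n = m + 3 := ⟨n - 3, by omega⟩
  set c := x⁻¹ * α x
  have hxp : α (x ^ p) = x ^ p := hfix_lt _ (m + 2) (by omega) <| by
    rw [← pow_mul, ← pow_succ', ← hn, pow_orderOf_eq_one]
  have hcxp : Commute c (x ^ p) := by
    have h : Commute (α x) (x ^ p) := by
      rw [← hxp]; exact ((Commute.refl x).pow_right p).map α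
    exact ((Commute.refl x).pow_right p).inv_left.mul_left h
  have hw : ∀ g, Commute ⁅c, x⁆ g := fun g =>
    (mem_center_iff.mp (hcen (commutator_mem_commutator (mem_top c) (mem_top x))) g).symm
  have hw_pow : ⁅c, x⁆ ^ p ^ (m + 1) = 1 := by
    rw [← commutatorElement_pow_right (hw x), commutatorElement_eq_one_iff_commute, pow_succ',
      pow_mul]
    exact hcxp.pow_right _
  have hxN : α (x ^ p ^ (m + 2)) = x ^ p ^ (m + 2) := hfix_lt _ 1 (by omega) <| by
    rw [← pow_mul, ← pow_add, ← hn, pow_orderOf_eq_one]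
  have hcN : c ^ p ^ (m + 2) = 1 := by
    obtain ⟨q, hq⟩ := hp.pow_dvd_choose_two_pow_succ (m + 1)
    have h := mul_pow_eq_commutatorElement_pow_choose_two (hw x) (hw c) (p ^ (m + 2))
    rw [mul_inv_cancel_left, ← map_pow, hxN, hq, pow_mul, hw_pow, one_pow, one_mul] at h
    exact left_eq_mul.mp h
  exact apply_eq_self_of_apply_inv_mul_apply_eq hP hα (hfix_lt c (m + 2) (by omega) hcN)

theorem eq_one_of_commutator_le_center (hP : IsPGroup p P) (hα : (orderOf α).Coprime p)
    (hcen : commutator P ≤ center P) (hfix : ∀ y : P, y ^ p ^ 2 = 1 → α y = y) : α = 1 := by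
  refine MulEquiv.ext fun x => ?_
  induction h : orderOf x using Nat.strong_induction_on generalizing x with
  | _ n ih =>
    exact apply_eq_self_of_forall_orderOf_lt hP hα hcen hfix fun y hy => ih _ (h ▸ hy) y rfl

theorem eq_one_of_forall_characteristic_ne_top [Finite P] (hP : IsPGroup p P)
    (hα : (orderOf α).Coprime p) (hfix : ∀ y : P, y ^ p ^ 2 = 1 → α y = y)
    (hchar : ∀ H : Subgroup P, H.Characteristic → H ≠ ⊤ → ∀ x ∈ H, α x = x) : α = 1 := by
  rcases subsingleton_or_nontrivial P with _ | _
  · exact MulEquiv.ext fun x => Subsingleton.elim _ _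
  have : Group.IsNilpotent P := hP.isNilpotent
  have hcomm : ∀ t ∈ commutator P, α t = t :=
    hchar _ inferInstance (Group.IsSolvable.commutator_lt_top_of_nontrivial P).ne
  by_cases hC : centralizer (commutator P : Set P) = ⊤
  · exact eq_one_of_commutator_le_center hP hα (centralizer_eq_top_iff_subset.mp hC) hfix
  · exact MulEquiv.ext fun u => apply_eq_self_of_apply_inv_mul_apply_eq hP hα
      (hchar _ inferInstance hC _ (inv_mul_apply_mem_centralizer_commutator hcomm u))

theorem eq_one_of_forall_pow_sq_eq_one_apply_eq [Finite P] (hP : IsPGroup p P)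
    (hα : (orderOf α).Coprime p) (hfix : ∀ y : P, y ^ p ^ 2 = 1 → α y = y) : α = 1 := by
  induction h : Nat.card P using Nat.strong_induction_on generalizing P with
  | _ n ih =>
    refine eq_one_of_forall_characteristic_ne_top hP hα hfix fun H _ hH x hx => ?_
    have hcard : Nat.card H < n :=
      h ▸ (card_le_card_group H).lt_of_ne fun h' => hH (card_eq_iff_eq_top H |>.mp h')
    have hres : MulAut.characteristic H α = 1 :=
      ih _ hcard (hP.to_subgroup H) (hα.coprime_dvd_left (orderOf_map_dvd _ _))
        (fun y hy => Subtype.ext (hfix y (by simpa using congrArg Subtype.val hy))) rfl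
    exact congrArg (fun β : MulAut H => (β ⟨x, hx⟩ : P)) hres

end MulAut

theorem pprime_aut_trivial_of_fixes_omega2 {P : Type*} [Group P] [Finite P]
    (p : ℕ) (hp : p.Prime) (hP : IsPGroup p P) (α : MulAut P)
    (hord : Nat.Coprime (orderOf α) p)
    (hfix : ∀ x ∈ Subgroup.closure {x : P | x ^ (p ^ 2) = 1}, α x = x) :
    α = 1 :=
  have : Fact p.Prime := ⟨hp⟩
  MulAut.eq_one_of_forall_pow_sq_eq_one_apply_eq hP hord fun y hy => hfix y (subset_closure hy)
end

section
/- Let C be a finite p-group of nilpotency class at most 2 with p odd. Then the subgroup Ω₁(C) generated by elements of order p has exponent p. -/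
open scoped commutatorElement

/-! In class two the commutator `c = ⁅b, a⁆` is central, so `(a * b) ^ n = a ^ n * b ^ n * c ^ n.choose 2`
and `b ^ n * a = a * b ^ n * c ^ n`. If `a ^ n = b ^ n = 1`, the second identity gives `c ^ n = 1`,
and for odd `n` we have `n ∣ n.choose 2`, so `(a * b) ^ n = 1`: the elements with `x ^ n = 1`
already form a subgroup. -/

theorem Nat.dvd_choose_two_of_odd {n : ℕ} (hn : Odd n) : n ∣ n.choose 2 := by
  rw [Nat.choose_two_right, Nat.mul_div_assoc n (Nat.Odd.sub_odd hn odd_one).two_dvd]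
  exact dvd_mul_right n _

section ClassTwo

variable {G : Type*} [Group G] {a b : G}

theorem pow_mul_eq_mul_pow_mul_commutatorElement_pow
    (hca : Commute ⁅b, a⁆ a) (hcb : Commute ⁅b, a⁆ b) (n : ℕ) :
    b ^ n * a = a * b ^ n * ⁅b, a⁆ ^ n := by
  induction n with
  | zero => simp
  | succ n ih =>
    have hba : b * a = a * b * ⁅b, a⁆ := by
      rw [show b * a = ⁅b, a⁆ * (a * b) by group, (hca.mul_right hcb).eq]
    calc b ^ (n + 1) * a = b ^ n * (b * a) := by rw [pow_succ, mul_assoc]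
      _ = b ^ n * a * b * ⁅b, a⁆ := by rw [hba]; simp only [mul_assoc]
      _ = a * b ^ n * (⁅b, a⁆ ^ n * b) * ⁅b, a⁆ := by rw [ih]; simp only [mul_assoc]
      _ = a * b ^ (n + 1) * ⁅b, a⁆ ^ (n + 1) := by
        rw [(hcb.pow_left n).eq, pow_succ, pow_succ]; simp only [mul_assoc]

theorem mul_pow_eq_pow_mul_pow_mul_commutatorElement_pow_choose_two
    (hca : Commute ⁅b, a⁆ a) (hcb : Commute ⁅b, a⁆ b) (n : ℕ) :
    (a * b) ^ n = a ^ n * b ^ n * ⁅b, a⁆ ^ n.choose 2 := by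
  induction n with
  | zero => simp
  | succ n ih =>
    calc (a * b) ^ (n + 1) = a ^ n * b ^ n * (⁅b, a⁆ ^ n.choose 2 * (a * b)) := by
          rw [pow_succ, ih, mul_assoc]
      _ = a ^ n * (b ^ n * a) * b * ⁅b, a⁆ ^ n.choose 2 := by
          rw [((hca.mul_right hcb).pow_left _).eq]; simp only [mul_assoc]
      _ = a ^ n * a * b ^ n * (⁅b, a⁆ ^ n * b) * ⁅b, a⁆ ^ n.choose 2 := by
          rw [pow_mul_eq_mul_pow_mul_commutatorElement_pow hca hcb]; simp only [mul_assoc]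
      _ = a ^ (n + 1) * b ^ (n + 1) * ⁅b, a⁆ ^ (n + 1).choose 2 := by
          rw [(hcb.pow_left n).eq, pow_succ a, pow_succ b, Nat.choose_succ_succ',
            Nat.choose_one_right, pow_add ⁅b, a⁆]
          simp only [mul_assoc]

theorem commutatorElement_pow_eq_one_of_pow_eq_one
    (hca : Commute ⁅b, a⁆ a) (hcb : Commute ⁅b, a⁆ b) {n : ℕ} (hb : b ^ n = 1) :
    ⁅b, a⁆ ^ n = 1 := by
  simpa [hb] using (pow_mul_eq_mul_pow_mul_commutatorElement_pow hca hcb n).symm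

theorem mul_pow_eq_one_of_odd (hca : Commute ⁅b, a⁆ a) (hcb : Commute ⁅b, a⁆ b)
    {n : ℕ} (hn : Odd n) (ha : a ^ n = 1) (hb : b ^ n = 1) :
    (a * b) ^ n = 1 := by
  obtain ⟨k, hk⟩ := Nat.dvd_choose_two_of_odd hn
  rw [mul_pow_eq_pow_mul_pow_mul_commutatorElement_pow_choose_two hca hcb, ha, hb, hk, pow_mul,
    commutatorElement_pow_eq_one_of_pow_eq_one hca hcb hb, one_pow, one_mul, one_mul]

end ClassTwo

theorem commute_commutatorElement_of_commutator_le_center {G : Type*} [Group G]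
    (h : commutator G ≤ Subgroup.center G) (g₁ g₂ x : G) : Commute ⁅g₁, g₂⁆ x :=
  (Subgroup.mem_center_iff.mp (h (Subgroup.commutator_mem_commutator
    (Subgroup.mem_top g₁) (Subgroup.mem_top g₂))) x).symm

theorem omega1_exponent_p_of_class_le_two_general {C : Type*} [Group C]
    (p : ℕ) (hodd : Odd p)
    (hclass : commutator C ≤ Subgroup.center C) :
    ∀ x ∈ Subgroup.closure {x : C | x ^ p = 1}, x ^ p = 1 := by
  have hcomm := commute_commutatorElement_of_commutator_le_center hclass
  intro x hx
  induction hx using Subgroup.closure_induction with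
  | mem y hy => exact hy
  | one => exact one_pow p
  | mul a b _ _ ha hb => exact mul_pow_eq_one_of_odd (hcomm b a a) (hcomm b a b) hodd ha hb
  | inv a _ ha => rw [inv_pow, ha, inv_one]

theorem omega1_exponent_p_of_class_le_two {C : Type*} [Group C] [Finite C]
    (p : ℕ) (hp : p.Prime) (hodd : Odd p) (hC : IsPGroup p C)
    (hclass : commutator C ≤ Subgroup.center C) :
    ∀ x ∈ Subgroup.closure {x : C | x ^ p = 1}, x ^ p = 1 :=
  omega1_exponent_p_of_class_le_two_general p hodd hclass
end

section
/- Let C be a finite 2-group of nilpotency class at most 2 such that C/Z(C) is elementary abelian. Then the subgroup Ω₂(C), generated by all elements of order dividing 4, has exponent at most 4. -/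
/-!
In a group of class at most 2 the commutators are central, which gives the power formula
`(x * y) ^ n = ⁅y, x⁆ ^ (n choose 2) * x ^ n * y ^ n`. If moreover all squares are central, then
`⁅y, x⁆ ^ 2 = ⁅y ^ 2, x⁆ = 1`, so `(x * y) ^ 4 = ⁅y, x⁆ ^ 6 * x ^ 4 * y ^ 4 = x ^ 4 * y ^ 4`.
Hence the elements of exponent dividing 4 form a subgroup, which contains `Ω₂`.
-/

open scoped commutatorElement

section ClassTwo

variable {G : Type*} [Group G]

theorem commute_commutatorElement_of_commutator_le_center_s8
    (h : commutator G ≤ Subgroup.center G) (a b g : G) : Commute ⁅a, b⁆ g :=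
  (Subgroup.mem_center_iff.mp
    (h (Subgroup.commutator_mem_commutator (Subgroup.mem_top a) (Subgroup.mem_top b))) g).symm

theorem commutatorElement_pow_left_of_commutator_le_center
    (h : commutator G ≤ Subgroup.center G) (a b : G) (n : ℕ) : ⁅a ^ n, b⁆ = ⁅a, b⁆ ^ n := by
  induction n with
  | zero => simp
  | succ n ih =>
    calc ⁅a ^ (n + 1), b⁆ = a * ⁅a ^ n, b⁆ * a⁻¹ * ⁅a, b⁆ := by
          simp only [pow_succ', commutatorElement_def]; group
      _ = ⁅a, b⁆ ^ (n + 1) := by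
          rw [(commute_commutatorElement_of_commutator_le_center_s8 h _ _ a).symm.eq, ih,
            mul_inv_cancel_right, pow_succ]

theorem mul_pow_of_commutator_le_center
    (h : commutator G ≤ Subgroup.center G) (x y : G) (n : ℕ) :
    (x * y) ^ n = ⁅y, x⁆ ^ n.choose 2 * x ^ n * y ^ n := by
  induction n with
  | zero => simp
  | succ n ih =>
    have central : ∀ g : G, Commute (⁅y, x⁆ ^ n) g := fun g =>
      (commute_commutatorElement_of_commutator_le_center_s8 h y x g).pow_left n
    have swap : y ^ n * x = ⁅y, x⁆ ^ n * x * y ^ n := by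
      rw [← commutatorElement_pow_left_of_commutator_le_center h, commutatorElement_def]; group
    calc (x * y) ^ (n + 1) = ⁅y, x⁆ ^ n.choose 2 * x ^ n * (y ^ n * x) * y := by
          rw [pow_succ, ih]; group
      _ = ⁅y, x⁆ ^ n.choose 2 * ⁅y, x⁆ ^ n * x ^ (n + 1) * y ^ (n + 1) := by
          rw [swap]
          simp only [pow_succ, mul_assoc, (central (x ^ n)).symm.left_comm]
      _ = ⁅y, x⁆ ^ (n + 1).choose 2 * x ^ (n + 1) * y ^ (n + 1) := by
          rw [Nat.choose_succ_succ', Nat.choose_one_right, ← pow_add, add_comm]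

theorem commutatorElement_sq_eq_one_of_sq_mem_center
    (h : commutator G ≤ Subgroup.center G) (hsq : ∀ x : G, x ^ 2 ∈ Subgroup.center G)
    (a b : G) : ⁅a, b⁆ ^ 2 = 1 := by
  rw [← commutatorElement_pow_left_of_commutator_le_center h,
    commutatorElement_eq_one_iff_commute]
  exact (Subgroup.mem_center_iff.mp (hsq a) b).symm

theorem mul_pow_four_of_sq_mem_center
    (h : commutator G ≤ Subgroup.center G) (hsq : ∀ x : G, x ^ 2 ∈ Subgroup.center G)
    (x y : G) : (x * y) ^ 4 = x ^ 4 * y ^ 4 := by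
  rw [mul_pow_of_commutator_le_center h, show Nat.choose 4 2 = 2 * 3 by rfl, pow_mul,
    commutatorElement_sq_eq_one_of_sq_mem_center h hsq, one_pow, one_mul]

end ClassTwo

theorem omega2_exponent_le_four_general {C : Type*} [Group C]
    (hclass : commutator C ≤ Subgroup.center C)
    (helem : ∀ x : C, x ^ 2 ∈ Subgroup.center C) :
    ∀ x ∈ Subgroup.closure {x : C | x ^ 4 = 1}, x ^ 4 = 1 := by
  intro x hx
  induction hx using Subgroup.closure_induction with
  | mem g hg => exact hg
  | one => exact one_pow 4
  | mul a b _ _ ha hb => rw [mul_pow_four_of_sq_mem_center hclass helem, ha, hb, one_mul]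
  | inv a _ ha => rw [inv_pow, ha, inv_one]

theorem omega2_exponent_le_four {C : Type*} [Group C] [Finite C]
    (hC : IsPGroup 2 C) (hclass : commutator C ≤ Subgroup.center C)
    (helem : ∀ x : C, x ^ 2 ∈ Subgroup.center C) :
    ∀ x ∈ Subgroup.closure {x : C | x ^ 4 = 1}, x ^ 4 = 1 :=
  omega2_exponent_le_four_general hclass helem
end

section
/- Let G be a finite group and p a prime divisor of |G| with gcd(|G|, p-1) = 1. If the Sylow p-subgroups of G are cyclic, then G is p-nilpotent (G has a normal p-complement). -/
/-!
Burnside's transfer theorem gives a normal `p`-complement as soon as a Sylow `p`-subgroup `P`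
is central in its normalizer. The quotient `N_G(P) / C_G(P)` embeds in `Aut P`, whose order
`φ(p^k)` divides `p^k (p - 1)` when `P` is cyclic of order `p^k`. Its order is prime to `p`
because the abelian `P` lies in `C_G(P)` and has index prime to `p` in `N_G(P)`, so it divides
`p - 1`; it also divides `|G|`, hence it is `1`.
-/

/-- `G` is `p`-nilpotent: it has a normal `p`-complement, i.e. a normal
subgroup of order coprime to `p` and of `p`-power index. -/
def IsPNilpotent (p : ℕ) (G : Type*) [Group G] : Prop :=
  ∃ N : Subgroup G, N.Normal ∧ Nat.Coprime (Nat.card N) p ∧ ∃ k : ℕ, N.index = p ^ k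

open Subgroup

theorem Nat.totient_prime_pow_dvd {p : ℕ} (hp : p.Prime) (k : ℕ) :
    Nat.totient (p ^ k) ∣ p ^ k * (p - 1) := by
  cases k with
  | zero => simp
  | succ n =>
    rw [Nat.totient_prime_pow_succ hp]
    exact mul_dvd_mul_right (pow_dvd_pow p n.le_succ) _

theorem IsPGroup.card_mulAut_dvd_of_isCyclic {p : ℕ} [Fact p.Prime] {H : Type*} [Group H]
    [Finite H] [IsCyclic H] (hH : IsPGroup p H) :
    Nat.card (MulAut H) ∣ Nat.card H * (p - 1) := by
  obtain ⟨k, hk⟩ := hH.exists_card_eq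
  rw [IsCyclic.card_mulAut, hk]
  exact Nat.totient_prime_pow_dvd Fact.out k

theorem Subgroup.relIndex_centralizer_normalizer_dvd_card_mulAut {G : Type*} [Group G]
    (H : Subgroup G) :
    (centralizer (H : Set G)).relIndex (normalizer (H : Set G)) ∣ Nat.card (MulAut H) := by
  have key := card_dvd_of_injective _ (QuotientGroup.kerLift_injective H.normalizerMonoidHom)
  rwa [normalizerMonoidHom_ker, ← index, ← relIndex] at key

theorem Sylow.normalizer_le_centralizer_of_isCyclic {G : Type*} [Group G] [Finite G] {p : ℕ}
    [Fact p.Prime] (P : Sylow p G) [IsCyclic P] (hcop : Nat.Coprime (Nat.card G) (p - 1)) :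
    normalizer (P : Set G) ≤ centralizer (P : Set G) := by
  set d := (centralizer (P : Set G)).relIndex (normalizer (P : Set G))
  have hd_aut : d ∣ Nat.card P * (p - 1) :=
    (relIndex_centralizer_normalizer_dvd_card_mulAut _).trans P.2.card_mulAut_dvd_of_isCyclic
  have hd_index : d ∣ (P : Subgroup G).index :=
    (relIndex_dvd_of_le_left _ (le_centralizer _)).trans (relIndex_dvd_index_of_le le_normalizer)
  have hd_card : d ∣ Nat.card G :=
    (relIndex_dvd_card _ _).trans (card_subgroup_dvd_card _)
  have hd_cop : Nat.Coprime d (Nat.card P) :=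
    Nat.Coprime.coprime_dvd_left hd_index P.card_coprime_index.symm
  exact relIndex_eq_one.mp <|
    Nat.eq_one_of_dvd_coprimes hcop hd_card (hd_cop.dvd_of_dvd_mul_left hd_aut)

theorem Sylow.isPNilpotent_of_normalizer_le_centralizer {G : Type*} [Group G] [Finite G]
    {p : ℕ} [Fact p.Prime] (P : Sylow p G)
    (hP : normalizer (P : Set G) ≤ centralizer (P : Set G)) : IsPNilpotent p G := by
  obtain ⟨k, hk⟩ := P.2.exists_card_eq
  refine ⟨(MonoidHom.transferSylow P hP).ker, MonoidHom.normal_ker _, ?_, k, ?_⟩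
  · exact (Nat.Prime.coprime_iff_not_dvd Fact.out).mpr
      (MonoidHom.not_dvd_card_ker_transferSylow P hP) |>.symm
  · rw [(MonoidHom.ker_transferSylow_isComplement' P hP).symm.index_eq_card, hk]

theorem pNilpotent_of_cyclic_sylow_general {G : Type*} [Group G] [Finite G]
    (p : ℕ) (hp : p.Prime)
    (hcop : Nat.gcd (Nat.card G) (p - 1) = 1)
    (hcyc : ∀ P : Sylow p G, IsCyclic (P : Subgroup G)) :
    IsPNilpotent p G := by
  have : Fact p.Prime := ⟨hp⟩
  obtain ⟨P⟩ : Nonempty (Sylow p G) := inferInstance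
  have := hcyc P
  exact P.isPNilpotent_of_normalizer_le_centralizer (P.normalizer_le_centralizer_of_isCyclic hcop)

theorem pNilpotent_of_cyclic_sylow {G : Type*} [Group G] [Finite G]
    (p : ℕ) (hp : p.Prime) (hdvd : p ∣ Nat.card G)
    (hcop : Nat.gcd (Nat.card G) (p - 1) = 1)
    (hcyc : ∀ P : Sylow p G, IsCyclic (P : Subgroup G)) :
    IsPNilpotent p G :=
  pNilpotent_of_cyclic_sylow_general p hp hcop hcyc
end

section
/- Let G be a finite group, p a prime divisor of |G| with gcd(|G|, p-1) = 1, and E a normal subgroup of G such that the p-part of |E| is at most p and G/E is p-nilpotent. Then G is p-nilpotent. -/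
open Subgroup

section

variable {p : ℕ} {G : Type*} [Group G]

theorem Subgroup.mem_iff_not_dvd_orderOf (hp : p.Prime) {K : Subgroup G} [K.Normal]
    (hKcop : (Nat.card K).Coprime p) (hKidx : ∃ k, K.index = p ^ k) (x : G) :
    x ∈ K ↔ ¬ p ∣ orderOf x := by
  obtain ⟨k, hk⟩ := hKidx
  constructor
  · intro hx hpx
    exact hp.coprime_iff_not_dvd.mp hKcop.symm (hpx.trans (orderOf_dvd_natCard K hx))
  · intro hpx
    have hdvd_pow : orderOf (x : G ⧸ K) ∣ p ^ k := by
      rw [← hk, index_eq_card]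
      exact _root_.orderOf_dvd_natCard _
    have hcop : (orderOf x).Coprime (p ^ k) :=
      Nat.Coprime.pow_right k ((hp.coprime_iff_not_dvd.mpr hpx).symm)
    rw [← QuotientGroup.eq_one_iff, ← orderOf_eq_one_iff]
    exact Nat.eq_one_of_dvd_coprimes hcop (orderOf_map_dvd (QuotientGroup.mk' K) x) hdvd_pow

theorem IsPNilpotent.of_normal_of_index_eq_pow (hp : p.Prime) (N : Subgroup G) [N.Normal]
    (hNidx : ∃ k, N.index = p ^ k) (hN : IsPNilpotent p N) : IsPNilpotent p G := by
  obtain ⟨K, hK, hKcop, k, hKidx⟩ := hN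
  obtain ⟨l, hNidx⟩ := hNidx
  have hmem : ∀ g : G, g ∈ K.map N.subtype ↔ g ∈ N ∧ ¬ p ∣ orderOf g := by
    intro g
    constructor
    · rintro ⟨x, hxK, rfl⟩
      exact ⟨x.2, orderOf_coe x ▸ (mem_iff_not_dvd_orderOf hp hKcop ⟨k, hKidx⟩ x).mp hxK⟩
    · rintro ⟨hgN, hpg⟩
      refine ⟨⟨g, hgN⟩, ?_, rfl⟩
      exact (mem_iff_not_dvd_orderOf hp hKcop ⟨k, hKidx⟩ _).mpr (by rwa [orderOf_mk])
  refine ⟨K.map N.subtype, ⟨fun g hg a => ?_⟩, ?_, k + l, ?_⟩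
  · rw [hmem] at hg ⊢
    exact ⟨Normal.conj_mem ‹_› g hg.1 a, (SemiconjBy.conj_mk a g).orderOf_eq ▸ hg.2⟩
  · rwa [Nat.card_congr (K.equivMapOfInjective N.subtype N.subtype_injective).toEquiv] at hKcop
  · rw [← relIndex_mul_index (map_subtype_le K), relIndex, subgroupOf,
      comap_map_eq_self_of_injective N.subtype_injective, hKidx, hNidx, pow_add]

theorem Subgroup.normalizer_le_centralizer_of_coprime (H : Subgroup G)
    (hcop : (Nat.card G).Coprime (Nat.card (MulAut H))) :
    normalizer (H : Set G) ≤ centralizer (H : Set G) := by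
  have hker : H.normalizerMonoidHom.ker.index = 1 := by
    refine Nat.eq_one_of_dvd_coprimes hcop ?_ ?_
    · exact (index_dvd_card _).trans (card_subgroup_dvd_card _)
    · rw [index_ker]
      exact card_subgroup_dvd_card _
  rw [index_eq_one, normalizerMonoidHom_ker] at hker
  exact subgroupOf_eq_top.mp hker

theorem IsPNilpotent.of_normalizer_le_centralizer [Finite G] [Fact p.Prime] (P : Sylow p G)
    (hP : normalizer (P : Set G) ≤ centralizer (P : Set G)) : IsPNilpotent p G := by
  have hcompl := MonoidHom.ker_transferSylow_isComplement' P hP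
  obtain ⟨k, hk⟩ := P.2.exists_card_eq
  exact ⟨_, MonoidHom.normal_ker _,
    ((Fact.out : p.Prime).coprime_iff_not_dvd.mpr
      (MonoidHom.not_dvd_card_ker_transferSylow P hP)).symm,
    k, hcompl.symm.index_eq_card.trans hk⟩

theorem IsPNilpotent.of_factorization_le_one [Finite G] (hp : p.Prime)
    (hG : (Nat.card G).factorization p ≤ 1) (hcop : (Nat.card G).Coprime (p - 1)) :
    IsPNilpotent p G := by
  have := Fact.mk hp
  obtain ⟨P⟩ : Nonempty (Sylow p G) := inferInstance
  have hPp : Nat.card P ∣ p := by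
    rw [P.card_eq_multiplicity]
    exact (pow_dvd_pow p hG).trans (pow_one p).dvd
  have : IsCyclic P := isCyclic_of_card_dvd_prime hPp
  refine of_normalizer_le_centralizer P (normalizer_le_centralizer_of_coprime _ ?_)
  rw [IsCyclic.card_mulAut]
  exact hcop.coprime_dvd_right ((Nat.totient_dvd_of_dvd hPp).trans (Nat.totient_prime hp).dvd)

theorem Subgroup.card_comap_mk' [Finite G] (E : Subgroup G) [E.Normal] (N : Subgroup (G ⧸ E)) :
    Nat.card (N.comap (QuotientGroup.mk' E)) = Nat.card N * Nat.card E := by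
  have hidx := index_comap_of_surjective N (QuotientGroup.mk'_surjective E)
  refine Nat.eq_of_mul_eq_mul_right (Nat.pos_of_ne_zero (index_ne_zero_of_finite (H := N))) ?_
  rw [← hidx, card_mul_index, hidx, mul_right_comm, card_mul_index,
    ← card_eq_card_quotient_mul_card_subgroup]

end

theorem pNilpotent_of_quotient_general {G : Type*} [Group G] [Finite G]
    (p : ℕ) (hp : p.Prime)
    (hcop : Nat.gcd (Nat.card G) (p - 1) = 1)
    (E : Subgroup G) [E.Normal] (hEp : (Nat.card E).factorization p ≤ 1)
    (hquot : IsPNilpotent p (G ⧸ E)) :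
    IsPNilpotent p G := by
  obtain ⟨N', hN', hN'cop, k, hN'idx⟩ := hquot
  let N := N'.comap (QuotientGroup.mk' E)
  have : N.Normal := hN'.comap _
  have hNp : (Nat.card N).factorization p ≤ 1 := by
    rw [card_comap_mk', Nat.factorization_mul Nat.card_pos.ne' Nat.card_pos.ne',
      Finsupp.add_apply, Nat.factorization_eq_zero_of_not_dvd
        (hp.coprime_iff_not_dvd.mp hN'cop.symm), zero_add]
    exact hEp
  have hNcop : (Nat.card N).Coprime (p - 1) :=
    Nat.Coprime.coprime_dvd_left (card_subgroup_dvd_card N) hcop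
  exact IsPNilpotent.of_normal_of_index_eq_pow hp N
    ⟨k, (index_comap_of_surjective N' (QuotientGroup.mk'_surjective E)).trans hN'idx⟩
    (IsPNilpotent.of_factorization_le_one hp hNp hNcop)

theorem pNilpotent_of_quotient {G : Type*} [Group G] [Finite G]
    (p : ℕ) (hp : p.Prime) (hdvd : p ∣ Nat.card G)
    (hcop : Nat.gcd (Nat.card G) (p - 1) = 1)
    (E : Subgroup G) [E.Normal] (hEp : (Nat.card E).factorization p ≤ 1)
    (hquot : IsPNilpotent p (G ⧸ E)) :
    IsPNilpotent p G :=
  pNilpotent_of_quotient_general p hp hcop E hEp hquot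
end

section
/- Let G be a finite group, P a normal p-subgroup of G, and suppose that every proper subgroup H of P with |H| = 1 or |H| = p, and (if p = 2 and P is not quaternion-free) every cyclic subgroup of P of order 4, either is Π-supplemented in G or has a p-supersoluble supplement in G. If moreover P is elementary abelian, then P is contained in the supersoluble hypercentre Z_𝒰(G). -/
open scoped Pointwise

/-- A group is quaternion-free if no section is isomorphic to ;
equivalently, no subgroup maps onto . -/
def QuaternionFree (G : Type*) [Group G] : Prop :=
  ∀ (H : Subgroup G) (f : H →* QuaternionGroup 2), ¬ Function.Surjective f

/-- A finite group is -supersoluble iff every chief factor has order 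
or order coprime to . -/
def IsPSupersoluble (p : ℕ) (G : Type*) [Group G] : Prop :=
  ∀ K L : Subgroup G, IsChiefFactor G K L →
    K.relIndex L = p ∨ Nat.Coprime (K.relIndex L) p

/-!
Every chief factor `L/K` of `G` with `L ≤ P` has order `p`; induct on `L`. As `L/K` is a
nontrivial normal `p`-subgroup of `G/K`, some `xK ≠ 1` in it is centralised by a Sylow
`p`-subgroup of `G/K`. Since `P` has exponent `p`, `H = ⟨x⟩` has order `p` and meets `K` trivially,
so it is enough to get `HK = L`. There are three cases.
* `H` has the Π-property: the normaliser of `HK/K` has `p'`-index, hence index one, so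
  `HK ⊴ G` and `HK = L`.
* `H` has a complement `T`: since `P` is abelian, `H` centralises `L`, so `L ∩ T ⊴ G`. Either
  `L ∩ T ≤ K` and `L = H(L ∩ T) ≤ HK`, or `L/K ≅ (L ∩ T)/(K ∩ T)` is a chief factor below `L`.
* `H ≤ T` for a `p`-supersoluble supplement `T`: then `T = G`, and the `p`-chief factor `L/K`
  has order `p`.
-/

open Subgroup QuotientGroup

section

variable {G : Type*} [Group G]

def HasPSupersolubleSupplement (p : ℕ) (H : Subgroup G) : Prop :=
  ∃ T : Subgroup G, (H : Set G) * (T : Set G) = Set.univ ∧ IsPSupersoluble p T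

namespace Subgroup

theorem eq_bot_or_eq_of_le_of_card_prime {p : ℕ} (hp : p.Prime) {A B : Subgroup G}
    (hA : Nat.card A = p) (hBA : B ≤ A) : B = ⊥ ∨ B = A := by
  have : Finite A := Nat.finite_of_card_ne_zero (hA ▸ hp.ne_zero)
  rcases hp.eq_one_or_self_of_dvd _ (hA ▸ card_dvd_of_le hBA) with hB | hB
  · exact Or.inl (card_eq_one.mp hB)
  · exact Or.inr (eq_of_le_of_card_ge hBA (hA ▸ hB.ge))

theorem inf_eq_bot_or_le_of_card_prime {p : ℕ} (hp : p.Prime) {A : Subgroup G}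
    (hA : Nat.card A = p) (B : Subgroup G) : A ⊓ B = ⊥ ∨ A ≤ B :=
  (eq_bot_or_eq_of_le_of_card_prime hp hA inf_le_left).imp_right inf_eq_left.mp

theorem relIndex_sup_right_of_inf_eq_bot {H K : Subgroup G} [K.Normal] (h : H ⊓ K = ⊥) :
    K.relIndex (H ⊔ K) = Nat.card H := by
  rw [relIndex_sup_right, ← inf_relIndex_right, inf_comm, h, relIndex_bot_left]

section Supplement

variable {H T : Subgroup G}

theorem eq_top_of_mul_eq_univ_of_le (hHT : (H : Set G) * (T : Set G) = Set.univ) (hle : H ≤ T) :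
    T = ⊤ :=
  eq_top_iff.mpr fun g _ => by
    obtain ⟨h, hh, t, ht, rfl⟩ : g ∈ (H : Set G) * T := hHT ▸ Set.mem_univ g
    exact T.mul_mem (hle hh) ht

theorem sup_inf_eq_of_mul_eq_univ (hHT : (H : Set G) * (T : Set G) = Set.univ)
    {L : Subgroup G} (hHL : H ≤ L) : H ⊔ L ⊓ T = L := by
  refine le_antisymm (sup_le hHL inf_le_left) fun l hl => ?_
  obtain ⟨h, hh, t, ht, rfl⟩ : l ∈ (H : Set G) * T := hHT ▸ Set.mem_univ l
  have htL : t ∈ L := by simpa using L.mul_mem (L.inv_mem (hHL hh)) hl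
  exact mul_mem_sup hh ⟨htL, ht⟩

theorem inf_normal_of_mul_eq_univ (hHT : (H : Set G) * (T : Set G) = Set.univ)
    {L : Subgroup G} [hL : L.Normal] (hHL : H ≤ centralizer L) : (L ⊓ T).Normal := by
  refine ⟨fun m hm g => ?_⟩
  obtain ⟨h, hh, t, ht, rfl⟩ : g ∈ (H : Set G) * T := hHT ▸ Set.mem_univ g
  have htm : t * m * t⁻¹ ∈ L ⊓ T :=
    ⟨hL.conj_mem m hm.1 t, T.mul_mem (T.mul_mem ht hm.2) (T.inv_mem ht)⟩
  have hcomm : t * m * t⁻¹ * h = h * (t * m * t⁻¹) := mem_centralizer_iff.mp (hHL hh) _ htm.1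
  have hconj : h * t * m * (h * t)⁻¹ = t * m * t⁻¹ := by
    rw [mul_inv_rev, show h * t * m * (t⁻¹ * h⁻¹) = h * (t * m * t⁻¹) * h⁻¹ by group,
      ← hcomm, mul_inv_cancel_right]
  exact hconj ▸ htm

end Supplement

end Subgroup

namespace IsPGroup

variable [Finite G] {p : ℕ} [Fact p.Prime]

theorem exists_ne_one_mem_center_of_normal (hG : IsPGroup p G) {N : Subgroup G} [N.Normal]
    (hN : N ≠ ⊥) : ∃ w ∈ N, w ≠ 1 ∧ w ∈ center G := by
  have hpN : p ∣ Nat.card N := by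
    obtain ⟨n, hn, hcard⟩ :=
      ((hG.to_subgroup N).nontrivial_iff_card).mp ((nontrivial_iff_ne_bot N).mpr hN)
    exact hcard ▸ dvd_pow_self p hn.ne'
  have h1 : (1 : N) ∈ MulAction.fixedPoints (ConjAct G) N := fun g => smul_one g
  obtain ⟨w, hw, hw1⟩ :=
    (hG.of_equiv ConjAct.toConjAct).exists_fixed_point_of_prime_dvd_card_of_fixed_point N hpN h1
  refine ⟨w, w.2, fun h => hw1 (Subtype.ext h.symm), mem_center_iff.mpr fun g => ?_⟩
  exact mul_inv_eq_iff_eq_mul.mp (congrArg Subtype.val (hw (ConjAct.toConjAct g)))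

theorem exists_ne_one_not_dvd_index_normalizer_zpowers {N : Subgroup G} [hNn : N.Normal]
    (hN : IsPGroup p N) (hN' : N ≠ ⊥) :
    ∃ w ∈ N, w ≠ 1 ∧ ¬ p ∣ (normalizer (zpowers w : Set G)).index := by
  let S : Sylow p G := default
  have hNS : N ≤ S := hN.le_sylow_of_normal S
  have : (N.subgroupOf S).Normal := hNn.subgroupOf S
  have hW : N.subgroupOf S ≠ ⊥ := fun h =>
    hN' (disjoint_self.mp ((subgroupOf_eq_bot.mp h).mono_right hNS))
  obtain ⟨w, hwN, hw1, hwZ⟩ := S.isPGroup'.exists_ne_one_mem_center_of_normal hW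
  have hSw : (S : Subgroup G) ≤ centralizer (zpowers (w : G) : Set G) :=
    le_centralizer_iff.mpr <| zpowers_le.mpr <| mem_centralizer_iff.mpr fun s hs =>
      congrArg Subtype.val (mem_center_iff.mp hwZ ⟨s, hs⟩)
  refine ⟨w, hwN, fun h => hw1 (Subtype.ext h), fun hdvd => S.not_dvd_index ?_⟩
  exact hdvd.trans (index_dvd_of_le (hSw.trans (centralizer_le_normalizer _)))

end IsPGroup

namespace IsChiefFactor

variable {K L : Subgroup G}

theorem lt (hc : IsChiefFactor G K L) : K < L := hc.2.2.1

theorem eq_of_normal (hc : IsChiefFactor G K L) {N : Subgroup G} (hN : N.Normal) (hKN : K < N)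
    (hNL : N ≤ L) : N = L :=
  (hc.2.2.2 N hN hKN.le hNL).resolve_left hKN.ne'

theorem comap_mulEquiv {G' : Type*} [Group G'] (e : G' ≃* G) (hc : IsChiefFactor G K L) :
    IsChiefFactor G' (K.comap e.toMonoidHom) (L.comap e.toMonoidHom) := by
  have he : Function.Surjective e.toMonoidHom := e.surjective
  refine ⟨hc.1.comap _, hc.2.1.comap _, (comap_lt_comap_of_surjective he).mpr hc.lt,
    fun N hN hKN hNL => ?_⟩
  have hmap := hc.2.2.2 (N.map e.toMonoidHom) (hN.map _ he)
    (map_comap_eq_self_of_surjective he K ▸ map_mono hKN)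
    (map_comap_eq_self_of_surjective he L ▸ map_mono hNL)
  rw [← comap_map_eq_self_of_injective (f := e.toMonoidHom) e.injective N]
  exact hmap.imp (congrArg _) (congrArg _)

theorem exists_notMem_not_dvd_index_normalizer [Finite G] {p : ℕ} [Fact p.Prime]
    (hc : IsChiefFactor G K L) [K.Normal] (hL : IsPGroup p L) :
    ∃ x ∈ L, x ∉ K ∧ ¬ p ∣ (normalizer (zpowers (x : G ⧸ K) : Set (G ⧸ K))).index := by
  have : (L.map (mk' K)).Normal := hc.2.1.map _ (mk'_surjective K)
  have hne : L.map (mk' K) ≠ ⊥ := by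
    rw [Ne, Subgroup.map_eq_bot_iff, ker_mk']
    exact hc.lt.not_ge
  obtain ⟨_, ⟨x, hxL, rfl⟩, hx1, hidx⟩ :=
    (hL.map (mk' K)).exists_ne_one_not_dvd_index_normalizer_zpowers hne
  exact ⟨x, hxL, fun hxK => hx1 ((eq_one_iff x).mpr hxK), hidx⟩

theorem inf_of_sup_eq (hc : IsChiefFactor G K L) {M : Subgroup G} [hM : M.Normal]
    (hMK : M ⊔ K = L) : IsChiefFactor G (K ⊓ M) M := by
  have := hc.1
  refine ⟨inferInstance, hM, inf_le_right.lt_of_ne fun h => ?_, fun N hN hKMN hNM => ?_⟩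
  · exact hc.lt.ne (by rw [← hMK, sup_eq_right.mpr (h ▸ inf_le_left)])
  rcases hc.2.2.2 (N ⊔ K) inferInstance le_sup_right (hMK ▸ sup_le_sup_right hNM K) with h | h
  · exact Or.inl (le_antisymm (le_inf (le_sup_left.trans h.le) hNM) hKMN)
  · refine Or.inr (le_antisymm hNM fun m hm => ?_)
    have hmNK : m ∈ (N : Set G) * K := by rw [← mul_normal, h, ← hMK]; exact mem_sup_left hm
    obtain ⟨n, hn, k, hk, rfl⟩ := hmNK
    have hkM : k ∈ M := by simpa using M.mul_mem (M.inv_mem (hNM hn)) hm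
    exact N.mul_mem hn (hKMN ⟨hk, hkM⟩)

theorem sup_eq_or_exists_lt_of_mul_eq_univ (hc : IsChiefFactor G K L) {H T : Subgroup G}
    (hHT : (H : Set G) * (T : Set G) = Set.univ) (hHT' : H ⊓ T = ⊥) (hHK : ¬ H ≤ K)
    (hHL : H ≤ L) (hcent : H ≤ centralizer L) :
    H ⊔ K = L ∨ ∃ M < L, IsChiefFactor G (K ⊓ M) M ∧ (K ⊓ M).relIndex M = K.relIndex L := by
  have := hc.1
  have := hc.2.1
  have := inf_normal_of_mul_eq_univ hHT hcent
  rcases hc.2.2.2 (L ⊓ T ⊔ K) inferInstance le_sup_right (sup_le inf_le_left hc.lt.le)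
    with h | h
  · refine Or.inl (le_antisymm (sup_le hHL hc.lt.le) ?_)
    calc L = H ⊔ L ⊓ T := (sup_inf_eq_of_mul_eq_univ hHT hHL).symm
      _ ≤ H ⊔ K := sup_le_sup_left (le_sup_left.trans h.le) H
  · refine Or.inr ⟨L ⊓ T, inf_le_left.lt_of_ne fun hLT => hHK ?_, hc.inf_of_sup_eq h, ?_⟩
    · calc H ≤ H ⊓ T := le_inf le_rfl (hHL.trans (hLT ▸ inf_le_right))
        _ = ⊥ := hHT'
        _ ≤ K := bot_le
    · rw [inf_relIndex_right, ← relIndex_sup_right, h]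

end IsChiefFactor

theorem PiProperty.sup_normal {p : ℕ} (hp : p.Prime) [Finite G] {H K L : Subgroup G} [K.Normal]
    (hH : PiProperty G H) (hc : IsChiefFactor G K L) (hHL : H ≤ L)
    (hHp : IsPGroup p (H.map (mk' K)))
    (hidx : ¬ p ∣ (normalizer (H.map (mk' K) : Set (G ⧸ K))).index) : (H ⊔ K).Normal := by
  have := Fact.mk hp
  have hX : H.map (mk' K) ⊓ L.map (mk' K) = H.map (mk' K) := inf_eq_left.mpr (map_mono hHL)
  have hidx1 : (normalizer (H.map (mk' K) : Set (G ⧸ K))).index = 1 := by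
    by_contra hne
    obtain ⟨q, hq, hqdvd⟩ := Nat.exists_prime_and_dvd hne
    have hqX := hH K L inferInstance hc q hq (hX.symm ▸ hqdvd)
    obtain ⟨n, hn⟩ := IsPGroup.iff_card.mp hHp
    rw [hX, hn] at hqX
    exact hidx ((Nat.prime_dvd_prime_iff_eq hq hp).mp (hq.dvd_of_dvd_pow hqX) ▸ hqdvd)
  have hXn := normalizer_eq_top_iff.mp (index_eq_one.mp hidx1)
  simpa only [comap_map_eq, ker_mk'] using hXn.comap (mk' K)

theorem IsPSupersoluble.of_mulEquiv {p : ℕ} {G' : Type*} [Group G'] (e : G ≃* G')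
    (hG : IsPSupersoluble p G) : IsPSupersoluble p G' := fun K L hc => by
  have hrel : (K.comap e.toMonoidHom).relIndex (L.comap e.toMonoidHom) = K.relIndex L := by
    rw [relIndex_comap, map_comap_eq_self_of_surjective e.surjective]
  exact hrel ▸ hG _ _ (hc.comap_mulEquiv e)

theorem IsPSupersoluble.relIndex_eq_of_dvd {p : ℕ} (hp : p.Prime) (hG : IsPSupersoluble p G)
    {K L : Subgroup G} (hc : IsChiefFactor G K L) (hdvd : p ∣ K.relIndex L) :
    K.relIndex L = p :=
  (hG K L hc).resolve_right fun h => hp.ne_one (h.symm.eq_one_of_dvd hdvd)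

theorem piProperty_or_complement_or_isPSupersoluble {p : ℕ} (hp : p.Prime) {H : Subgroup G}
    (hH : Nat.card H = p) (h : PiSupplemented G H ∨ HasPSupersolubleSupplement p H) :
    PiProperty G H ∨ (∃ T : Subgroup G, (H : Set G) * (T : Set G) = Set.univ ∧ H ⊓ T = ⊥) ∨
      IsPSupersoluble p G := by
  rcases h with ⟨T, hHT, I, hTI, hIH, hI⟩ | ⟨T, hHT, hT⟩
  · rcases eq_bot_or_eq_of_le_of_card_prime hp hH hIH with rfl | rfl
    · exact Or.inr (Or.inl ⟨T, hHT, le_bot_iff.mp hTI⟩)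
    · exact Or.inl hI
  · rcases inf_eq_bot_or_le_of_card_prime hp hH T with hbot | hle
    · exact Or.inr (Or.inl ⟨T, hHT, hbot⟩)
    · obtain rfl := eq_top_of_mul_eq_univ_of_le hHT hle
      exact Or.inr (Or.inr (hT.of_mulEquiv topEquiv))

theorem IsChiefFactor.relIndex_eq_of_le_of_supplemented [Finite G] {p : ℕ} (hp : p.Prime)
    {P : Subgroup G} (hPp : IsPGroup p P) (hexp : ∀ x ∈ P, x ^ p = 1)
    (hcomm : ∀ x ∈ P, ∀ y ∈ P, x * y = y * x)
    (hsupp : ∀ H < P, Nat.card H = p → PiSupplemented G H ∨ HasPSupersolubleSupplement p H)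
    {K L : Subgroup G} (hc : IsChiefFactor G K L) (hLP : L ≤ P) : K.relIndex L = p := by
  have := Fact.mk hp
  induction L using WellFoundedLT.induction generalizing K with
  | _ L ih =>
  have := hc.1
  obtain ⟨x, hxL, hxK, hidx⟩ := hc.exists_notMem_not_dvd_index_normalizer (hPp.to_le hLP)
  have hHL : zpowers x ≤ L := zpowers_le.mpr hxL
  have hHK : ¬ zpowers x ≤ K := fun h => hxK (h (mem_zpowers x))
  have hHcard : Nat.card (zpowers x) = p := by
    rw [Nat.card_zpowers, orderOf_eq_prime (hexp x (hLP hxL)) (fun h => hxK (h ▸ K.one_mem))]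
  have hKH : K.relIndex (zpowers x ⊔ K) = p := by
    rw [relIndex_sup_right_of_inf_eq_bot
      ((inf_eq_bot_or_le_of_card_prime hp hHcard K).resolve_right hHK), hHcard]
  have hHKL : zpowers x ⊔ K ≤ L := sup_le hHL hc.lt.le
  obtain hHP | hHP := (hHL.trans hLP).eq_or_lt
  · exact le_antisymm hHKL (hLP.trans (hHP ▸ le_sup_left)) ▸ hKH
  have hcent : zpowers x ≤ centralizer L := zpowers_le.mpr <| mem_centralizer_iff.mpr
    fun l hl => hcomm l (hLP hl) x (hLP hxL)
  rcases piProperty_or_complement_or_isPSupersoluble hp hHcard (hsupp _ hHP hHcard) with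
    hPi | ⟨T, hHT, hHT'⟩ | hG
  · have hHp : IsPGroup p ((zpowers x).map (mk' K)) := (hPp.to_le (hHL.trans hLP)).map _
    have hn := hPi.sup_normal hp hc hHL hHp (by rwa [MonoidHom.map_zpowers])
    exact hc.eq_of_normal hn (right_lt_sup.mpr hHK) hHKL ▸ hKH
  · rcases hc.sup_eq_or_exists_lt_of_mul_eq_univ hHT hHT' hHK hHL hcent with
      h | ⟨M, hML, hcM, hrel⟩
    · exact h ▸ hKH
    · exact hrel ▸ ih M hML hcM (hML.le.trans hLP)
  · refine hG.relIndex_eq_of_dvd hp hc ⟨(zpowers x ⊔ K).relIndex L, ?_⟩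
    rw [← hKH, relIndex_mul_relIndex _ _ _ le_sup_right hHKL]

end

theorem elementary_abelian_in_hypercentre_general {G : Type*} [Group G] [Finite G]
    (p : ℕ) (hp : p.Prime) (P : Subgroup G) [P.Normal] (hPp : IsPGroup p P)
    (helem : (∀ x ∈ P, x ^ p = 1) ∧ ∀ x ∈ P, ∀ y ∈ P, x * y = y * x)
    (h1 : ∀ H : Subgroup G, H < P → (Nat.card H = 1 ∨ Nat.card H = p) →
      PiSupplemented G H ∨
        ∃ T : Subgroup G, (H : Set G) * (T : Set G) = (Set.univ : Set G) ∧
          IsPSupersoluble p T) :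
    ∃ Z : Subgroup G, Z.Normal ∧ P ≤ Z ∧
      ∀ K L : Subgroup G, IsChiefFactor G K L → L ≤ Z →
        ∃ q : ℕ, q.Prime ∧ K.relIndex L = q :=
  ⟨P, inferInstance, le_rfl, fun _ _ hc hLP => ⟨p, hp,
    hc.relIndex_eq_of_le_of_supplemented hp hPp helem.1 helem.2
      (fun H hH hcard => h1 H hH (Or.inr hcard)) hLP⟩⟩

theorem elementary_abelian_in_hypercentre {G : Type*} [Group G] [Finite G]
    (p : ℕ) (hp : p.Prime) (P : Subgroup G) [P.Normal] (hPp : IsPGroup p P)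
    (helem : (∀ x ∈ P, x ^ p = 1) ∧ ∀ x ∈ P, ∀ y ∈ P, x * y = y * x)
    (h1 : ∀ H : Subgroup G, H < P → (Nat.card H = 1 ∨ Nat.card H = p) →
      PiSupplemented G H ∨
        ∃ T : Subgroup G, (H : Set G) * (T : Set G) = (Set.univ : Set G) ∧
          IsPSupersoluble p T)
    (h4 : p = 2 → ¬ QuaternionFree P →
      ∀ H : Subgroup G, H ≤ P → IsCyclic H → Nat.card H = 4 →
        PiSupplemented G H ∨
          ∃ T : Subgroup G, (H : Set G) * (T : Set G) = (Set.univ : Set G) ∧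
            IsPSupersoluble 2 T) :
    ∃ Z : Subgroup G, Z.Normal ∧ P ≤ Z ∧
      ∀ K L : Subgroup G, IsChiefFactor G K L → L ≤ Z →
        ∃ q : ℕ, q.Prime ∧ K.relIndex L = q :=
  elementary_abelian_in_hypercentre_general p hp P hPp helem h1
end
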